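/- For every n ≥ 1, every complex root q_r of the Fibonacci polynomial 𝓕_n satisfies R_* < |q_r| < R_*^{-1}, and the same bounds hold for every complex root of the reversed polynomial q^{n−2}·𝓕_n(1/q) when n ≥ 2. -/
import Mathlib
open Polynomial

noncomputable def fibPoly : ℕ → Polynomial ℤ
  | 0 => 0
  | 1 => 1
  | (n + 2) =>
    if n % 2 = 0 then fibPoly (n + 1) + X ^ 2 * fibPoly n
    else X * fibPoly (n + 1) + fibPoly n

/-- `R_* = (3 − √5)/2`. -/
noncomputable def Rstar : ℝ := (3 - Real.sqrt 5) / 2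

lemma fibPoly_even (l : ℕ) : fibPoly (2*l+2) = fibPoly (2*l+1) + X^2 * fibPoly (2*l) := by
  rw [fibPoly]; simp

lemma fibPoly_odd (l : ℕ) : fibPoly (2*l+3) = X * fibPoly (2*l+2) + fibPoly (2*l+1) := by
  rw [show 2*l+3 = (2*l+1)+2 by ring, fibPoly]; simp [Nat.add_mod]

lemma fibPoly_one : fibPoly 1 = 1 := rfl

lemma fibPoly_two : fibPoly 2 = 1 := by
  rw [show (2:ℕ) = 2*0+2 by ring, fibPoly_even]; simp [fibPoly]

lemma fibPoly_three : fibPoly 3 = X + 1 := by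
  rw [show (3:ℕ) = 2*0+3 by ring, fibPoly_odd, fibPoly_two]; simp [fibPoly]

lemma norm_lb (x y : ℂ) : ‖y‖ - ‖x‖ ≤ ‖x + y‖ := by
  have h : y = (x + y) - x := by ring
  calc ‖y‖ - ‖x‖ ≤ ‖(x+y)‖ + ‖x‖ - ‖x‖ := by
        have := norm_sub_le (x+y) x
        rw [← h] at this; linarith
    _ = ‖x + y‖ := by ring

lemma norm_lb' (x y : ℂ) : ‖x‖ - ‖y‖ ≤ ‖x + y‖ := by
  have := norm_lb y x
  rwa [add_comm y x] at this

/-- The key real inequalities for `r ≥ (3+√5)/2`, with `a = (r²+r−1)/2`. -/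
lemma key_ineqs {r : ℝ} (hr : (3 + Real.sqrt 5)/2 ≤ r) :
    (13/5 : ℝ) ≤ r ∧ 0 < r^2 - (r^2+r-1)/2 ∧
    ((r^2+r-1)/2 - r) * (r^2 - (r^2+r-1)/2) ≥ (r^2+r-1)/2 ∧
    0 < r^3 - r*((r^2+r-1)/2) - (r^2+r-1)/2 ∧
    r + 1 ≤ (r^2+r-1)/2 ∧
    ((r^2+r-1)/2 - r) * (r - 1) ≥ 1 := by
  have hs : Real.sqrt 5 * Real.sqrt 5 = 5 := Real.mul_self_sqrt (by norm_num)
  have hs0 : 0 ≤ Real.sqrt 5 := Real.sqrt_nonneg 5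
  have hs2 : (11/5 : ℝ) ≤ Real.sqrt 5 := by nlinarith
  have hr26 : (13/5 : ℝ) ≤ r := by linarith
  have h31 : r^2 - 3*r + 1 ≥ 0 := by nlinarith [mul_nonneg (by linarith : (0:ℝ) ≤ r - (3 + Real.sqrt 5)/2) (by nlinarith : (0:ℝ) ≤ r - (3 - Real.sqrt 5)/2)]
  refine ⟨hr26, by nlinarith, ?_, by nlinarith, by nlinarith, by nlinarith⟩
  nlinarith [mul_nonneg h31 (by nlinarith : (0:ℝ) ≤ r^2 + r + 1)]

/-- No roots of `fibPoly n` with norm ≥ (3+√5)/2. -/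
lemma fib_ne_zero_big (w : ℂ) (hw : (3 + Real.sqrt 5)/2 ≤ ‖w‖) :
    ∀ n : ℕ, 1 ≤ n → aeval w (fibPoly n) ≠ 0 := by
  set r := ‖w‖ with hrdef
  set a := (r^2 + r - 1)/2 with hadef
  obtain ⟨hr26, h1, h2, h3, h4, h6⟩ := key_ineqs hw
  rw [← hadef] at h1 h2 h3 h4 h6
  set f : ℕ → ℂ := fun n => aeval w (fibPoly n) with hfdef
  have hfe : ∀ l : ℕ, f (2*l+2) = f (2*l+1) + w^2 * f (2*l) := by
    intro l; simp only [hfdef, fibPoly_even l, map_add, map_mul, map_pow, aeval_X]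
  have hfo : ∀ l : ℕ, f (2*l+3) = w * f (2*l+2) + f (2*l+1) := by
    intro l; simp only [hfdef, fibPoly_odd l, map_add, map_mul, aeval_X]
  have har : a - r > 0 := by linarith
  -- invariant
  have P : ∀ l : ℕ, f (2*l+2) ≠ 0 ∧ f (2*l+3) ≠ 0 ∧ ‖f (2*l+3)‖ ≤ a * ‖f (2*l+2)‖ := by
    intro l
    induction l with
    | zero =>
      have hf2 : f 2 = 1 := by simp [hfdef, fibPoly_two]
      have hf3 : f 3 = w + 1 := by simp [hfdef, fibPoly_three]
      have hlb : r - 1 ≤ ‖f 3‖ := by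
        rw [hf3, hrdef]
        have h := norm_lb' w 1
        simpa using h
      have hub : ‖f 3‖ ≤ r + 1 := by
        rw [hf3]
        calc ‖w + 1‖ ≤ ‖w‖ + ‖(1:ℂ)‖ := norm_add_le _ _
          _ = r + 1 := by rw [hrdef]; simp
      refine ⟨by simp [hf2], ?_, ?_⟩
      · intro h; rw [h] at hlb; simp at hlb; linarith
      · rw [hf2]; simp only [norm_one, mul_one]; linarith
    | succ l ih =>
      obtain ⟨h22, h23, hb⟩ := ih
      have e4 : f (2*l+4) = f (2*l+3) + w^2 * f (2*l+2) := by
        have := hfe (l+1)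
        rw [show 2*(l+1)+2 = 2*l+4 by ring, show 2*(l+1)+1 = 2*l+3 by ring,
            show 2*(l+1) = 2*l+2 by ring] at this
        exact this
      have e5 : f (2*l+5) = w * f (2*l+4) + f (2*l+3) := by
        have := hfo (l+1)
        rw [show 2*(l+1)+3 = 2*l+5 by ring, show 2*(l+1)+2 = 2*l+4 by ring,
            show 2*(l+1)+1 = 2*l+3 by ring] at this
        exact this
      have hn22 : (0:ℝ) < ‖f (2*l+2)‖ := norm_pos_iff.mpr h22
      have l4 : (r^2 - a) * ‖f (2*l+2)‖ ≤ ‖f (2*l+4)‖ := by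
        rw [e4]
        have hlow := norm_lb (f (2*l+3)) (w^2 * f (2*l+2))
        have hnm : ‖w^2 * f (2*l+2)‖ = r^2 * ‖f (2*l+2)‖ := by
          rw [norm_mul, norm_pow]
        linarith
      have h24 : f (2*l+4) ≠ 0 := by
        intro h
        rw [h, norm_zero] at l4
        nlinarith [mul_pos h1 hn22]
      have l5 : (r^3 - r*a - a) * ‖f (2*l+2)‖ ≤ ‖f (2*l+5)‖ := by
        rw [e5]
        have hlow := norm_lb' (w * f (2*l+4)) (f (2*l+3))
        have hnm : ‖w * f (2*l+4)‖ = r * ‖f (2*l+4)‖ := norm_mul _ _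
        nlinarith [mul_le_mul_of_nonneg_left l4 (by linarith : (0:ℝ) ≤ r)]
      have h25 : f (2*l+5) ≠ 0 := by
        intro h
        rw [h, norm_zero] at l5
        nlinarith [mul_pos h3 hn22]
      have u5 : ‖f (2*l+5)‖ ≤ a * ‖f (2*l+4)‖ := by
        rw [e5]
        have hub := norm_add_le (w * f (2*l+4)) (f (2*l+3))
        have hnm : ‖w * f (2*l+4)‖ = r * ‖f (2*l+4)‖ := norm_mul _ _
        nlinarith [mul_le_mul_of_nonneg_left l4 (le_of_lt har),
          mul_le_mul_of_nonneg_right h2 (le_of_lt hn22)]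
      exact ⟨by rw [show 2*(l+1)+2 = 2*l+4 by ring]; exact h24,
             by rw [show 2*(l+1)+3 = 2*l+5 by ring]; exact h25,
             by rw [show 2*(l+1)+3 = 2*l+5 by ring, show 2*(l+1)+2 = 2*l+4 by ring]; exact u5⟩
  intro n hn
  rcases Nat.even_or_odd n with ⟨l, hl⟩ | ⟨l, hl⟩
  · have hl1 : 1 ≤ l := by omega
    have : n = 2*(l-1)+2 := by omega
    rw [this]; exact (P (l-1)).1
  · rcases Nat.eq_or_lt_of_le hn with h | h
    · rw [← h]; show f 1 ≠ 0; simp [hfdef, fibPoly_one]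
    · have : n = 2*(l-1)+3 := by omega
      rw [this]; exact (P (l-1)).2.1

set_option maxHeartbeats 2000000 in
/-- No roots of `fibPoly n` with small norm: `aeval w⁻¹` never vanishes for `‖w‖ ≥ (3+√5)/2`. -/
lemma fib_inv_ne_zero_big (w : ℂ) (hw : (3 + Real.sqrt 5)/2 ≤ ‖w‖) :
    ∀ n : ℕ, 1 ≤ n → aeval w⁻¹ (fibPoly n) ≠ 0 := by
  set r := ‖w‖ with hrdef
  set a := (r^2 + r - 1)/2 with hadef
  obtain ⟨hr26, h1, h2, h3, h4, h6⟩ := key_ineqs hw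
  rw [← hadef] at h1 h2 h3 h4 h6
  have hrpos : (0:ℝ) < r := by linarith
  have hw0 : w ≠ 0 := by
    intro h; rw [hrdef, h, norm_zero] at hrpos; linarith
  have har : a - r > 0 := by linarith
  obtain ⟨g, hgdef⟩ : ∃ g : ℕ → ℂ, ∀ n, g n = w^n * aeval w⁻¹ (fibPoly n) :=
    ⟨_, fun n => rfl⟩
  have hge : ∀ l : ℕ, g (2*l+2) = w * g (2*l+1) + g (2*l) := by
    intro l
    simp only [hgdef, fibPoly_even l, map_add, map_mul, map_pow, aeval_X]
    field_simp
    ring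
  have hgo : ∀ l : ℕ, g (2*l+3) = g (2*l+2) + w^2 * g (2*l+1) := by
    intro l
    simp only [hgdef, fibPoly_odd l, map_add, map_mul, aeval_X]
    field_simp
    ring
  have hg2 : g 2 = w^2 := by simp [hgdef, fibPoly_two]
  have hg3 : g 3 = w^2 * (1 + w) := by
    simp only [hgdef, fibPoly_three, map_add, aeval_X, map_one]
    field_simp
  have hng2 : ‖g 2‖ = r^2 := by rw [hg2, norm_pow, hrdef]
  have hng3 : r^2 * (r - 1) ≤ ‖g 3‖ := by
    rw [hg3, norm_mul, norm_pow, ← hrdef]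
    have h1w : r - 1 ≤ ‖(1:ℂ) + w‖ := by
      rw [hrdef]
      have := norm_lb 1 w
      simpa using this
    nlinarith [sq_nonneg r]
  have hg3pos : (0:ℝ) < ‖g 3‖ := by nlinarith
  have Q : ∀ l : ℕ, g (2*l+3) ≠ 0 ∧ g (2*l+4) ≠ 0 ∧ ‖g (2*l+4)‖ ≤ a * ‖g (2*l+3)‖ := by
    intro l
    induction l with
    | zero =>
      have e4 : g 4 = w * g 3 + g 2 := by
        have := hge 1
        norm_num at this
        exact this
      have l4 : r * ‖g 3‖ - r^2 ≤ ‖g 4‖ := by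
        rw [e4]
        have hlow := norm_lb' (w * g 3) (g 2)
        rw [norm_mul, ← hrdef, hng2] at hlow
        linarith
      have u4 : ‖g 4‖ ≤ a * ‖g 3‖ := by
        rw [e4]
        have hub := norm_add_le (w * g 3) (g 2)
        rw [norm_mul, ← hrdef, hng2] at hub
        nlinarith [mul_le_mul_of_nonneg_left hng3 har.le,
          mul_le_mul_of_nonneg_left h6 (sq_nonneg r)]
      have hg4pos : (0:ℝ) < ‖g 4‖ := by nlinarith
      exact ⟨norm_pos_iff.mp hg3pos, norm_pos_iff.mp hg4pos, u4⟩
    | succ l ih =>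
      obtain ⟨h23, h24, hb⟩ := ih
      have hn23 : (0:ℝ) < ‖g (2*l+3)‖ := norm_pos_iff.mpr h23
      have e5 : g (2*l+5) = g (2*l+4) + w^2 * g (2*l+3) := by
        have := hgo (l+1)
        rw [show 2*(l+1)+3 = 2*l+5 by ring, show 2*(l+1)+2 = 2*l+4 by ring,
            show 2*(l+1)+1 = 2*l+3 by ring] at this
        exact this
      have e6 : g (2*l+6) = w * g (2*l+5) + g (2*l+4) := by
        have := hge (l+2)
        rw [show 2*(l+2)+2 = 2*l+6 by ring, show 2*(l+2)+1 = 2*l+5 by ring,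
            show 2*(l+2) = 2*l+4 by ring] at this
        exact this
      have l5 : (r^2 - a) * ‖g (2*l+3)‖ ≤ ‖g (2*l+5)‖ := by
        rw [e5]
        have hlow := norm_lb (g (2*l+4)) (w^2 * g (2*l+3))
        have hnm : ‖w^2 * g (2*l+3)‖ = r^2 * ‖g (2*l+3)‖ := by
          rw [norm_mul, norm_pow, ← hrdef]
        linarith
      have h25 : g (2*l+5) ≠ 0 := by
        intro h
        rw [h, norm_zero] at l5
        nlinarith [mul_pos h1 hn23]
      have l6 : (r^3 - r*a - a) * ‖g (2*l+3)‖ ≤ ‖g (2*l+6)‖ := by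
        rw [e6]
        have hlow := norm_lb' (w * g (2*l+5)) (g (2*l+4))
        have hnm : ‖w * g (2*l+5)‖ = r * ‖g (2*l+5)‖ := by
          rw [norm_mul, ← hrdef]
        nlinarith [mul_le_mul_of_nonneg_left l5 (by linarith : (0:ℝ) ≤ r)]
      have h26 : g (2*l+6) ≠ 0 := by
        intro h
        rw [h, norm_zero] at l6
        nlinarith [mul_pos h3 hn23]
      have u6 : ‖g (2*l+6)‖ ≤ a * ‖g (2*l+5)‖ := by
        rw [e6]
        have hub := norm_add_le (w * g (2*l+5)) (g (2*l+4))
        have hnm : ‖w * g (2*l+5)‖ = r * ‖g (2*l+5)‖ := by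
          rw [norm_mul, ← hrdef]
        nlinarith [mul_le_mul_of_nonneg_left l5 (le_of_lt har),
          mul_le_mul_of_nonneg_right h2 (le_of_lt hn23)]
      exact ⟨by rw [show 2*(l+1)+3 = 2*l+5 by ring]; exact h25,
             by rw [show 2*(l+1)+4 = 2*l+6 by ring]; exact h26,
             by rw [show 2*(l+1)+4 = 2*l+6 by ring, show 2*(l+1)+3 = 2*l+5 by ring]; exact u6⟩
  have key : ∀ n : ℕ, 1 ≤ n → g n ≠ 0 := by
    intro n hn
    match n, hn with
    | 1, _ => simp [hgdef, fibPoly_one, hw0]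
    | 2, _ => rw [hg2]; exact pow_ne_zero 2 hw0
    | (m+3), _ =>
      rcases Nat.even_or_odd m with ⟨l, hl⟩ | ⟨l, hl⟩
      · have : m + 3 = 2*l+3 := by omega
        rw [this]; exact (Q l).1
      · have : m + 3 = 2*l+4 := by omega
        rw [this]; exact (Q l).2.1
  intro n hn hzero
  apply key n hn
  rw [hgdef n, hzero, mul_zero]

lemma fibPoly_monic_deg : ∀ l : ℕ,
    ((fibPoly (2*l+2)).Monic ∧ (fibPoly (2*l+2)).degree = (2*l : ℕ)) ∧
    ((fibPoly (2*l+3)).Monic ∧ (fibPoly (2*l+3)).degree = (2*l+1 : ℕ)) := by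
  intro l
  induction l with
  | zero =>
    refine ⟨⟨?_, ?_⟩, ⟨?_, ?_⟩⟩
    · rw [fibPoly_two]; exact monic_one
    · rw [fibPoly_two]; simp
    · rw [fibPoly_three, show (X + 1 : Polynomial ℤ) = X + C 1 by simp]
      exact monic_X_add_C 1
    · rw [fibPoly_three, show (X + 1 : Polynomial ℤ) = X + C 1 by simp]
      rw [degree_X_add_C]; norm_num
  | succ l ih =>
    obtain ⟨⟨hm2, hd2⟩, ⟨hm3, hd3⟩⟩ := ih
    have hmq : (X^2 * fibPoly (2*l+2)).Monic := (monic_X_pow 2).mul hm2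
    have hdq : (X^2 * fibPoly (2*l+2)).degree = ((2*l+2 : ℕ) : WithBot ℕ) := by
      rw [degree_mul, degree_X_pow, hd2]
      norm_cast; try omega
    have hlt : (fibPoly (2*l+3)).degree < (X^2 * fibPoly (2*l+2)).degree := by
      rw [hd3, hdq]; exact_mod_cast Nat.lt_succ_self _
    have he : fibPoly (2*(l+1)+2) = fibPoly (2*l+3) + X^2 * fibPoly (2*l+2) := by
      have := fibPoly_even (l+1)
      rw [show 2*(l+1)+1 = 2*l+3 by ring, show 2*(l+1) = 2*l+2 by ring] at this
      exact this
    have hm4 : (fibPoly (2*(l+1)+2)).Monic := by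
      rw [he]; exact hmq.add_of_right hlt
    have hd4 : (fibPoly (2*(l+1)+2)).degree = ((2*(l+1) : ℕ) : WithBot ℕ) := by
      rw [he, degree_add_eq_right_of_degree_lt hlt, hdq]
      norm_cast; try omega
    refine ⟨⟨hm4, hd4⟩, ?_, ?_⟩
    · have hmq' : (X * fibPoly (2*(l+1)+2)).Monic := monic_X.mul hm4
      have hlt' : (fibPoly (2*l+3)).degree < (X * fibPoly (2*(l+1)+2)).degree := by
        rw [hd3, degree_mul, degree_X, hd4]
        refine lt_of_lt_of_le ?_ le_rfl
        norm_cast; omega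
      rw [show 2*(l+1)+3 = 2*(l+1)+3 from rfl, show (2*(l+1)+3) = 2*(l+1)+3 from rfl]
      have ho := fibPoly_odd (l+1)
      rw [show 2*(l+1)+1 = 2*l+3 by ring] at ho
      rw [ho, add_comm]
      exact hmq'.add_of_right hlt'
    · have hlt' : (fibPoly (2*l+3)).degree < (X * fibPoly (2*(l+1)+2)).degree := by
        rw [hd3, degree_mul, degree_X, hd4]
        refine lt_of_lt_of_le ?_ le_rfl
        norm_cast; omega
      have ho := fibPoly_odd (l+1)
      rw [show 2*(l+1)+1 = 2*l+3 by ring] at ho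
      rw [ho, add_comm, degree_add_eq_right_of_degree_lt hlt', degree_mul, degree_X, hd4]
      norm_cast; try omega

lemma fibPoly_aeval_zero : ∀ l : ℕ,
    aeval (0:ℂ) (fibPoly (2*l+1)) = 1 ∧ aeval (0:ℂ) (fibPoly (2*l+2)) = 1 := by
  intro l
  induction l with
  | zero => constructor <;> simp [fibPoly_one, fibPoly_two]
  | succ l ih =>
    have ho : aeval (0:ℂ) (fibPoly (2*l+3)) = 1 := by
      rw [fibPoly_odd l]
      simp [ih.1]
    constructor
    · rw [show 2*(l+1)+1 = 2*l+3 by ring]; exact ho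
    · have := fibPoly_even (l+1)
      rw [show 2*(l+1)+1 = 2*l+3 by ring] at this
      rw [this]
      simp [ho]

lemma fibPoly_props {n : ℕ} (hn : 2 ≤ n) :
    (fibPoly n).Monic ∧ (fibPoly n).natDegree = n - 2 := by
  rcases Nat.even_or_odd n with ⟨l, hl⟩ | ⟨l, hl⟩
  · have hn' : n = 2*(l-1)+2 := by omega
    obtain ⟨⟨hm, hd⟩, _⟩ := fibPoly_monic_deg (l-1)
    refine ⟨by rw [hn']; exact hm, ?_⟩
    rw [hn', natDegree_eq_of_degree_eq_some hd]
    omega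
  · have hn' : n = 2*(l-1)+3 := by omega
    obtain ⟨_, hm, hd⟩ := fibPoly_monic_deg (l-1)
    refine ⟨by rw [hn']; exact hm, ?_⟩
    rw [hn', natDegree_eq_of_degree_eq_some hd]
    omega

theorem fibPoly_roots_in_annulus :
    (∀ n : ℕ, 1 ≤ n → ∀ q : ℂ, aeval q (fibPoly n) = 0 →
      Rstar < ‖q‖ ∧ ‖q‖ < Rstar⁻¹) ∧
    (∀ n : ℕ, 2 ≤ n → ∀ q : ℂ, aeval q (reflect (n - 2) (fibPoly n)) = 0 →
      Rstar < ‖q‖ ∧ ‖q‖ < Rstar⁻¹) := by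
  have hs : Real.sqrt 5 ^ 2 = 5 := Real.sq_sqrt (by norm_num)
  have hs0 : (0:ℝ) ≤ Real.sqrt 5 := Real.sqrt_nonneg 5
  have hs_lb : (11/5:ℝ) ≤ Real.sqrt 5 := by nlinarith
  have hs_ub : Real.sqrt 5 ≤ 9/4 := by nlinarith
  have hRpos : 0 < Rstar := by rw [Rstar]; linarith
  have hRinv : Rstar⁻¹ = (3 + Real.sqrt 5)/2 := by
    refine inv_eq_of_mul_eq_one_right ?_
    rw [Rstar]
    linear_combination (-1/4 : ℝ) * hs
  have heval0 : ∀ n : ℕ, 1 ≤ n → aeval (0:ℂ) (fibPoly n) = 1 := by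
    intro n hn
    rcases Nat.even_or_odd n with ⟨l, hl⟩ | ⟨l, hl⟩
    · have : n = 2*(l-1)+2 := by omega
      rw [this]; exact (fibPoly_aeval_zero (l-1)).2
    · have : n = 2*l+1 := by omega
      rw [this]; exact (fibPoly_aeval_zero l).1
  have main1 : ∀ n : ℕ, 1 ≤ n → ∀ q : ℂ, aeval q (fibPoly n) = 0 →
      Rstar < ‖q‖ ∧ ‖q‖ < Rstar⁻¹ := by
    intro n hn q hq
    constructor
    · by_contra hle
      push_neg at hle
      have hq0 : q ≠ 0 := by
        intro h
        rw [h, heval0 n hn] at hq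
        exact one_ne_zero hq
      have hqpos : (0:ℝ) < ‖q‖ := norm_pos_iff.mpr hq0
      have hwn : (3 + Real.sqrt 5)/2 ≤ ‖q⁻¹‖ := by
        rw [norm_inv, ← hRinv]
        exact inv_anti₀ hqpos hle
      exact fib_inv_ne_zero_big q⁻¹ hwn n hn (by rw [inv_inv]; exact hq)
    · by_contra hge
      push_neg at hge
      rw [hRinv] at hge
      exact fib_ne_zero_big q hge n hn hq
  refine ⟨main1, ?_⟩
  intro n hn s hsroot
  obtain ⟨hm, hd⟩ := fibPoly_props hn
  have hs0' : s ≠ 0 := by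
    intro h
    rw [h, aeval_def, eval₂_at_zero, coeff_reflect, revAt_le (Nat.zero_le _),
        Nat.sub_zero, ← hd, hm.coeff_natDegree] at hsroot
    simp at hsroot
  have hinvroot : aeval s⁻¹ (fibPoly n) = 0 := by
    have hx0 : s⁻¹ ≠ 0 := inv_ne_zero hs0'
    letI := invertibleOfNonzero hx0
    have h := eval₂_reflect_eq_zero_iff (algebraMap ℤ ℂ) s⁻¹ (n-2) (fibPoly n) (le_of_eq hd)
    rw [invOf_eq_inv, inv_inv] at h
    rw [aeval_def]
    exact h.mp (by rw [← aeval_def]; exact hsroot)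
  obtain ⟨hlo, hhi⟩ := main1 n (le_trans one_le_two hn) s⁻¹ hinvroot
  rw [norm_inv] at hlo hhi
  have hspos : (0:ℝ) < ‖s‖ := norm_pos_iff.mpr hs0'
  constructor
  · exact (inv_lt_inv₀ hspos hRpos).mp hhi
  · have h1 : Rstar * ‖s‖ < 1 := by
      have := mul_lt_mul_of_pos_right hlo hspos
      rwa [inv_mul_cancel₀ hspos.ne'] at this
    nlinarith [mul_inv_cancel₀ hRpos.ne']
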